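/- arXiv:math/9908145 — 3 statements merged into one kernel-verified Lean document; each statement's English description precedes it below -/
import Mathlib

section
/- Define \(G_i(a,b;c;x) := \sum_{k=0}^i \frac{(a)_k}{\Gamma(c+k)} L_{i-k}^{(-b-i-1)}(-x)\, L_k^{(b)}(x)\). Then for every nonnegative integer i and real a, c with \(a+1 \ne 0\) and \(a-c+2 \ne 0\): \(G_i(a+2,a;c;x) = \frac{1}{(a+1)(a-c+2)\Gamma(c+i)} \sum_{j=0}^i (-1)^j \binom{a-c+2}{j}\binom{a-c+2}{i-j}(a+1)_{i-j}\,[(a+1)(a-c+2)+j(i-j)]\, x^j\). -/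
open Finset

/-- Rising factorial (Pochhammer symbol) `(x)_k = x(x+1)⋯(x+k-1)`. -/
noncomputable def poch (x : ℝ) (k : ℕ) : ℝ := (ascPochhammer ℝ k).eval x

/-- Generalized binomial coefficient `C(y, m) = (y-m+1)_m / m!` for real `y`. -/
noncomputable def gbinom (y : ℝ) (m : ℕ) : ℝ := poch (y - m + 1) m / m.factorial

/-- Generalized binomial coefficient with integer lower index, zero for negative index. -/
noncomputable def gbinomZ (y : ℝ) (m : ℤ) : ℝ := if 0 ≤ m then gbinom y m.toNat else 0

/-- Generalized Laguerre polynomial `L_n^{(a)}(x)`, defined for all real `a`. -/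
noncomputable def Lag (n : ℕ) (a : ℝ) (x : ℝ) : ℝ :=
  ∑ k ∈ range (n + 1),
    (-1 : ℝ) ^ k * poch (a + k + 1) (n - k) / (n - k).factorial * x ^ k / k.factorial

/-!
Clearing `1 / Γ(c + k) = (c + k)_{i-k} / Γ(c + i)`, the claim becomes a polynomial identity in
`x`. Expanding both Laguerre polynomials and writing `k = q + s`, the coefficient of `x ^ j` is a
double sum over `q ≤ j` and `s ≤ M := i - j`. The `s`-sum is a Chu–Vandermonde sum, equal to
`C(a - c + 2, M)`. In the `q`-sum the identity
`(a + 1) (a + 2)_q (a + q + 1)_M = (a + 1)_M ((a + 1 + M) (a + 2 + M)_q - M (a + 1 + M)_q)`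
splits it into two more Chu–Vandermonde sums, whose combination produces the factor
`(a + 1)(a - c + 2) + j (i - j)`.
-/

open Nat

lemma poch_succ_right (x : ℝ) (n : ℕ) : poch x (n + 1) = poch x n * (x + n) := by
  simp [poch, ascPochhammer_succ_right]

lemma poch_succ_left (x : ℝ) (n : ℕ) : poch x (n + 1) = x * poch (x + 1) n := by
  simp [poch, ascPochhammer_succ_left]

lemma poch_add (x : ℝ) (m n : ℕ) : poch x (m + n) = poch x m * poch (x + m) n := by
  simp [poch, ← ascPochhammer_mul, add_comm]

lemma poch_neg (x : ℝ) (n : ℕ) : poch (-x) n = (-1) ^ n * poch (x - n + 1) n := by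
  rw [poch, ascPochhammer_eval_neg_eq_descPochhammer, descPochhammer_eval_eq_ascPochhammer, poch]

lemma add_mul_poch (x : ℝ) (n : ℕ) : (x + n) * poch x n = x * poch (x + 1) n := by
  rw [mul_comm, ← poch_succ_right, poch_succ_left]

-- Also valid at the poles, where `Real.Gamma` is `0` and so is its inverse, as for the entire `1/Γ`.
lemma inv_Gamma_eq_poch_mul_inv_Gamma (z : ℝ) (m : ℕ) :
    (Real.Gamma z)⁻¹ = poch z m * (Real.Gamma (z + m))⁻¹ := by
  induction m generalizing z with
  | zero => simp [poch]
  | succ m ih =>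
    have step : (Real.Gamma z)⁻¹ = z * (Real.Gamma (z + 1))⁻¹ := by
      rcases eq_or_ne z 0 with rfl | hz
      · simp
      · rw [Real.Gamma_add_one hz, mul_inv, mul_inv_cancel_left₀ hz]
    rw [step, ih, poch_succ_left, mul_assoc]
    push_cast
    ring_nf

lemma poch_div_factorial (x : ℝ) (n : ℕ) : poch x n / n ! = Ring.choose (x + n - 1) n := by
  rw [Ring.choose_eq_smul, Polynomial.descPochhammer_smeval_eq_ascPochhammer,
    Polynomial.ascPochhammer_smeval_eq_eval, smul_eq_mul, poch]
  ring_nf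

lemma neg_one_pow_mul_poch_div_factorial (x : ℝ) (n : ℕ) :
    (-1) ^ n * poch x n / n ! = Ring.choose (-x) n := by
  rw [Ring.choose_neg, mul_div_assoc, poch_div_factorial]
  simp [Units.smul_def]

theorem poch_vandermonde (N : ℕ) (A C : ℝ) :
    ∑ s ∈ range (N + 1), (-1) ^ s * poch A s / s ! * (poch (C + s) (N - s) / (N - s)!)
      = poch (C - A) N / N ! := by
  rw [poch_div_factorial, show C - A + N - 1 = -A + (C + N - 1) by ring,
    Ring.add_choose_eq N (Commute.all _ _), Nat.sum_antidiagonal_eq_sum_range_succ_mk]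
  refine sum_congr rfl fun s hs => ?_
  have hs : s ≤ N := Nat.lt_succ_iff.mp (mem_range.mp hs)
  rw [neg_one_pow_mul_poch_div_factorial, poch_div_factorial, Nat.cast_sub hs]
  ring_nf

lemma gbinom_eq_neg_one_pow_mul_poch (y : ℝ) (n : ℕ) :
    gbinom y n = (-1) ^ n * (poch (-y) n / n !) := by
  rw [gbinom, poch_neg, ← mul_div_assoc, ← mul_assoc, ← pow_add, Even.neg_one_pow ⟨n, rfl⟩,
    one_mul]

theorem sum_range_triangle_reindex {M : Type*} [AddCommMonoid M] (i : ℕ)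
    (f : ℕ → ℕ → ℕ → M) :
    ∑ k ∈ range (i + 1), ∑ p ∈ range (i - k + 1), ∑ q ∈ range (k + 1), f k p q
      = ∑ j ∈ range (i + 1), ∑ q ∈ range (j + 1), ∑ s ∈ range (i - j + 1),
          f (q + s) (j - q) q := by
  simp_rw [← sum_product']
  rw [sum_sigma', sum_sigma']
  refine sum_nbij' (fun x => ⟨x.2.1 + x.2.2, x.2.2, x.1 - x.2.2⟩)
    (fun x => ⟨x.2.1 + x.2.2, x.1 - x.2.1, x.2.1⟩) ?_ ?_ ?_ ?_ ?_
  all_goals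
    simp only [mem_sigma, mem_product, mem_range, Sigma.forall, Prod.forall, Sigma.mk.injEq,
      Prod.mk.injEq, heq_eq_eq, and_true, true_and]
    intro k p q h
  all_goals first | omega | congr <;> omega

lemma Lag_neg_sub_sub_one_neg (n : ℕ) (b x : ℝ) :
    Lag n (-b - n - 1) (-x)
      = ∑ p ∈ range (n + 1),
          (-1) ^ (n - p) * poch (b + 1) (n - p) / (n - p)! * x ^ p / p ! := by
  refine sum_congr rfl fun p hp => ?_
  have hp : p ≤ n := Nat.lt_succ_iff.mp (mem_range.mp hp)
  rw [show -b - n - 1 + p + 1 = -(b + (n - p : ℕ)) by push_cast [hp]; ring, poch_neg,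
    add_sub_cancel_right, neg_pow x]
  linear_combination (-1) ^ (n - p) * poch (b + 1) (n - p) / (n - p)! * x ^ p / p !
    * (Even.neg_one_pow ⟨p, rfl⟩ : (-1 : ℝ) ^ (p + p) = 1)

-- The `x ^ p * x ^ q` term of `(a + 2)_k (c + k)_{i-k} L_{i-k}^{(-a-i-1)}(-x) L_k^{(a)}(x)`.
noncomputable def lagProductTerm (a c x : ℝ) (i k p q : ℕ) : ℝ :=
  poch (a + 2) k * poch (c + k) (i - k)
    * ((-1) ^ (i - k - p) * poch (a + k + 1) (i - k - p) / (i - k - p)! * x ^ p / p !)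
    * ((-1) ^ q * poch (a + q + 1) (k - q) / (k - q)! * x ^ q / q !)

lemma poch_mul_Lag_mul_Lag (a c x : ℝ) {i k : ℕ} (hk : k ≤ i) :
    poch (a + 2) k * poch (c + k) (i - k) * Lag (i - k) (-a - i - 1) (-x) * Lag k a x
      = ∑ p ∈ range (i - k + 1), ∑ q ∈ range (k + 1), lagProductTerm a c x i k p q := by
  rw [show -a - i - 1 = -(a + k) - (i - k : ℕ) - 1 by push_cast [hk]; ring,
    Lag_neg_sub_sub_one_neg, Lag, mul_assoc, sum_mul_sum, mul_sum]
  simp only [mul_sum, lagProductTerm]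
  refine sum_congr rfl fun p _ => sum_congr rfl fun q _ => ?_
  ring

lemma sum_lagProductTerm (a c x : ℝ) (q p M : ℕ) :
    ∑ s ∈ range (M + 1), lagProductTerm a c x (q + p + M) (q + s) p q
      = gbinom (a - c + 2) M * x ^ (q + p)
        * ((-1) ^ q * poch (a + 2) q / q ! * poch (a + q + 1) M * (poch (c + M + q) p / p !)) := by
  have term : ∀ s ∈ range (M + 1), lagProductTerm a c x (q + p + M) (q + s) p q
      = x ^ (q + p)
          * ((-1) ^ q * poch (a + 2) q / q ! * poch (a + q + 1) M * (poch (c + M + q) p / p !))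
          * ((-1) ^ M
            * ((-1) ^ s * poch (a + q + 2) s / s ! * (poch (c + q + s) (M - s) / (M - s)!))) := by
    intro s hs
    obtain ⟨r, rfl⟩ := Nat.exists_eq_add_of_le (Nat.lt_succ_iff.mp (mem_range.mp hs))
    rw [lagProductTerm, show q + p + (s + r) - (q + s) = r + p by omega]
    simp only [Nat.add_sub_cancel, Nat.add_sub_cancel_left]
    have sign : (-1 : ℝ) ^ (s + r) * (-1) ^ s = (-1) ^ r := by
      rw [pow_add, mul_right_comm, ← pow_add, Even.neg_one_pow ⟨s, rfl⟩, one_mul]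
    rw [poch_add (a + 2), poch_add (c + _) r, poch_add (a + q + 1) s, ← sign]
    push_cast
    ring_nf
  rw [sum_congr rfl term, ← mul_sum, ← mul_sum, poch_vandermonde,
    gbinom_eq_neg_one_pow_mul_poch, show c + q - (a + q + 2) = -(a - c + 2) by ring]
  ring

lemma mul_poch_mul_poch (x : ℝ) (q M : ℕ) :
    x * poch (x + 1) q * poch (x + q) M
      = poch x M * ((x + M) * poch (x + M + 1) q - M * poch (x + M) q) := by
  have h₁ : x * poch (x + 1) q = poch x q * (x + q) := by rw [← poch_succ_left, poch_succ_right]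
  have h₂ : poch x q * poch (x + q) M = poch x M * poch (x + M) q := by
    rw [← poch_add, ← poch_add, add_comm]
  have h₃ := add_mul_poch (x + M) q
  linear_combination poch (x + q) M * h₁ + (x + q) * h₂ + poch x M * h₃

lemma mul_sum_poch_mul_poch_mul_poch (a c : ℝ) (j M : ℕ) :
    (a + 1) * (a - c + 2) * ∑ q ∈ range (j + 1),
        (-1) ^ q * poch (a + 2) q / q ! * poch (a + q + 1) M * (poch (c + M + q) (j - q) / (j - q)!)
      = (-1) ^ j * gbinom (a - c + 2) j * poch (a + 1) M * ((a + 1) * (a - c + 2) + j * M) := by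
  have vandermonde := poch_vandermonde j (C := c + M)
  have hstep : (a - c + 2) * poch (c - a - 1) j = poch (c - a - 2) j * (a - c + 2 - j) := by
    have h := poch_succ_left (c - a - 2) j
    rw [poch_succ_right, show c - a - 2 + 1 = c - a - 1 by ring] at h
    linear_combination h
  calc (a + 1) * (a - c + 2) * ∑ q ∈ range (j + 1),
        (-1) ^ q * poch (a + 2) q / q ! * poch (a + q + 1) M * (poch (c + M + q) (j - q) / (j - q)!)
      = (a - c + 2) * poch (a + 1) M
          * ((a + 1 + M) * ∑ q ∈ range (j + 1),
              (-1) ^ q * poch (a + 1 + M + 1) q / q ! * (poch (c + M + q) (j - q) / (j - q)!)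
            - M * ∑ q ∈ range (j + 1),
              (-1) ^ q * poch (a + 1 + M) q / q ! * (poch (c + M + q) (j - q) / (j - q)!)) := by
        simp only [mul_sum, ← sum_sub_distrib]
        refine sum_congr rfl fun q _ => ?_
        have h := mul_poch_mul_poch (a + 1) q M
        rw [show a + 1 + 1 = a + 2 by ring, show a + 1 + q = a + q + 1 by ring] at h
        linear_combination
          (a - c + 2) * (-1) ^ q / q ! * (poch (c + M + q) (j - q) / (j - q)!) * h
    _ = (-1) ^ j * gbinom (a - c + 2) j * poch (a + 1) M * ((a + 1) * (a - c + 2) + j * M) := by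
        rw [vandermonde, vandermonde, gbinom_eq_neg_one_pow_mul_poch,
          show c + M - (a + 1 + M + 1) = c - a - 2 by ring,
          show c + M - (a + 1 + M) = c - a - 1 by ring, show -(a - c + 2) = c - a - 2 by ring]
        linear_combination -(poch (a + 1) M * M / j !) * hstep
          - (poch (c - a - 2) j / j ! * poch (a + 1) M * ((a + 1) * (a - c + 2) + j * M))
            * (Even.neg_one_pow ⟨j, rfl⟩ : (-1 : ℝ) ^ (j + j) = 1)

lemma mul_sum_poch_mul_Lag_mul_Lag (a c x : ℝ) (i : ℕ) :
    (a + 1) * (a - c + 2) * ∑ k ∈ range (i + 1),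
        poch (a + 2) k * poch (c + k) (i - k) * Lag (i - k) (-a - i - 1) (-x) * Lag k a x
      = ∑ j ∈ range (i + 1), (-1) ^ j * gbinom (a - c + 2) j * gbinom (a - c + 2) (i - j)
          * poch (a + 1) (i - j) * ((a + 1) * (a - c + 2) + j * (i - j)) * x ^ j := by
  have expand : ∑ k ∈ range (i + 1),
        poch (a + 2) k * poch (c + k) (i - k) * Lag (i - k) (-a - i - 1) (-x) * Lag k a x
      = ∑ j ∈ range (i + 1), gbinom (a - c + 2) (i - j) * x ^ j * ∑ q ∈ range (j + 1),
          (-1) ^ q * poch (a + 2) q / q ! * poch (a + q + 1) (i - j)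
            * (poch (c + (i - j : ℕ) + q) (j - q) / (j - q)!) := by
    rw [sum_congr rfl fun k hk =>
        poch_mul_Lag_mul_Lag a c x (Nat.lt_succ_iff.mp (mem_range.mp hk)),
      sum_range_triangle_reindex]
    refine sum_congr rfl fun j hj => ?_
    rw [mul_sum]
    refine sum_congr rfl fun q hq => ?_
    obtain ⟨p, rfl⟩ := Nat.exists_eq_add_of_le (Nat.lt_succ_iff.mp (mem_range.mp hq))
    obtain ⟨M, rfl⟩ := Nat.exists_eq_add_of_le (Nat.lt_succ_iff.mp (mem_range.mp hj))
    simp only [Nat.add_sub_cancel_left]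
    exact sum_lagProductTerm a c x q p M
  rw [expand, mul_sum]
  refine sum_congr rfl fun j hj => ?_
  rw [← Nat.cast_sub (Nat.lt_succ_iff.mp (mem_range.mp hj))]
  linear_combination
    gbinom (a - c + 2) (i - j) * x ^ j * mul_sum_poch_mul_poch_mul_poch a c j (i - j)

theorem G_polynomial_formula (a c : ℝ) (i : ℕ) (x : ℝ)
    (h1 : a + 1 ≠ 0) (h2 : a - c + 2 ≠ 0) :
    ∑ k ∈ range (i + 1),
        poch (a + 2) k / Real.Gamma (c + k) * Lag (i - k) (-a - i - 1) (-x) * Lag k a x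
      = 1 / ((a + 1) * (a - c + 2) * Real.Gamma (c + i)) *
        ∑ j ∈ range (i + 1),
          (-1 : ℝ) ^ j * gbinom (a - c + 2) j * gbinom (a - c + 2) (i - j)
            * poch (a + 1) (i - j) * ((a + 1) * (a - c + 2) + (j : ℝ) * ((i : ℝ) - j))
            * x ^ j := by
  have hu : (a + 1) * (a - c + 2) ≠ 0 := mul_ne_zero h1 h2
  have gamma : ∀ k ∈ range (i + 1),
      poch (a + 2) k / Real.Gamma (c + k) * Lag (i - k) (-a - i - 1) (-x) * Lag k a x
        = (Real.Gamma (c + i))⁻¹ * (poch (a + 2) k * poch (c + k) (i - k)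
            * Lag (i - k) (-a - i - 1) (-x) * Lag k a x) := by
    intro k hk
    rw [div_eq_mul_inv, inv_Gamma_eq_poch_mul_inv_Gamma (c + k) (i - k),
      Nat.cast_sub (Nat.lt_succ_iff.mp (mem_range.mp hk)), add_add_sub_cancel]
    ring
  rw [sum_congr rfl gamma, ← mul_sum, ← mul_sum_poch_mul_Lag_mul_Lag, one_div, mul_inv,
    mul_mul_mul_comm, inv_mul_cancel₀ hu, one_mul]
end

section
/- For every real \(\alpha\) and nonnegative integer i, \(\sum_{j=0}^i \binom{j+\alpha+2}{j}\, L_{i-j}^{(-\alpha-i-3)}(-x) = \frac{x^i}{i!}\), as an identity of polynomials in x. -/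
/-!
Writing `multichoose r n = (r)_n / n!`, the coefficient `gbinom (j + α + 2) j` is
`multichoose (α + 3) j` and the coefficient of `(-x)^k / k!` in `L_n^{(a)}(x)` is
`multichoose (a + k + 1) (n - k)`. Since `multichoose r n = (-1)^n C(-r, n)`, Chu–Vandermonde
turns into `multichoose (r + s) n = ∑ multichoose r j * multichoose s (n - j)`, which is the
parameter shift `∑_j multichoose b j * L_{i-j}^{(a)} = L_i^{(a+b)}`. Here `a + b = -i`, and in
`L_i^{(-i)}` every coefficient but the leading one is a Pochhammer symbol `(1 - m)_m = 0`.
-/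

open Finset

namespace Ring

variable {R : Type*} [Ring R] [BinomialRing R]

theorem multichoose_eq_negOnePow_smul_choose_neg (r : R) (n : ℕ) :
    multichoose r n = Int.negOnePow n • choose (-r) n := by
  rw [choose_neg', smul_smul, ← Int.negOnePow_add, ← two_mul, Int.negOnePow_two_mul, one_smul]

theorem add_multichoose_eq {r s : R} (n : ℕ) (h : Commute r s) :
    multichoose (r + s) n =
      ∑ ij ∈ antidiagonal n, multichoose r ij.1 * multichoose s ij.2 := by
  have hneg : Commute (-r) (-s) := h.neg_left.neg_right
  rw [multichoose_eq_negOnePow_smul_choose_neg, neg_add, add_choose_eq n hneg, smul_sum]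
  refine sum_congr rfl fun ij hij => ?_
  rw [← mem_antidiagonal.mp hij, multichoose_eq_negOnePow_smul_choose_neg,
    multichoose_eq_negOnePow_smul_choose_neg, smul_mul_smul_comm, ← Int.negOnePow_add,
    Nat.cast_add]

end Ring

theorem poch_div_factorial_s14 (y : ℝ) (n : ℕ) : poch y n / n.factorial = Ring.multichoose y n := by
  rw [poch, div_eq_iff (by positivity), mul_comm, ← nsmul_eq_mul,
    Ring.factorial_nsmul_multichoose_eq_ascPochhammer, Polynomial.ascPochhammer_smeval_eq_eval]

theorem gbinom_eq_multichoose (y : ℝ) (n : ℕ) : gbinom y n = Ring.multichoose (y - n + 1) n :=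
  poch_div_factorial_s14 _ n

theorem lag_eq_sum_multichoose (n : ℕ) (a x : ℝ) :
    Lag n a x = ∑ k ∈ range (n + 1),
      Ring.multichoose (a + k + 1) (n - k) * ((-1) ^ k * x ^ k / k.factorial) := by
  refine sum_congr rfl fun k _ => ?_
  rw [← poch_div_factorial_s14]
  ring

theorem sum_range_triangle_comm {M : Type*} [AddCommMonoid M] (n : ℕ) (f : ℕ → ℕ → M) :
    ∑ j ∈ range (n + 1), ∑ k ∈ range (n - j + 1), f j k
      = ∑ k ∈ range (n + 1), ∑ j ∈ range (n - k + 1), f j k := by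
  rw [sum_sigma', sum_sigma']
  refine sum_nbij' (fun x ↦ ⟨x.2, x.1⟩) (fun x ↦ ⟨x.2, x.1⟩) ?_ ?_ (fun _ _ ↦ rfl)
    (fun _ _ ↦ rfl) (fun _ _ ↦ rfl) <;>
  simp only [mem_range, Sigma.forall, mem_sigma] <;>
  rintro a b ⟨h₁, h₂⟩ <;> omega

theorem sum_multichoose_mul_lag (i : ℕ) (a b x : ℝ) :
    ∑ j ∈ range (i + 1), Ring.multichoose b j * Lag (i - j) a x = Lag i (a + b) x := by
  set c : ℕ → ℝ := fun k => (-1) ^ k * x ^ k / k.factorial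
  have hvandermonde (k : ℕ) :
      ∑ j ∈ range (i - k + 1), Ring.multichoose b j * Ring.multichoose (a + k + 1) (i - k - j)
        = Ring.multichoose (a + b + k + 1) (i - k) := by
    rw [show a + b + k + 1 = b + (a + k + 1) by ring, Ring.add_multichoose_eq _ (.all _ _),
      Nat.sum_antidiagonal_eq_sum_range_succ
        (fun j l => Ring.multichoose b j * Ring.multichoose (a + k + 1) l)]
  calc ∑ j ∈ range (i + 1), Ring.multichoose b j * Lag (i - j) a x
      = ∑ j ∈ range (i + 1), ∑ k ∈ range (i - j + 1),
          Ring.multichoose b j * Ring.multichoose (a + k + 1) (i - k - j) * c k := by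
        refine sum_congr rfl fun j _ => ?_
        rw [lag_eq_sum_multichoose, mul_sum]
        refine sum_congr rfl fun k _ => ?_
        rw [Nat.sub_right_comm, mul_assoc]
    _ = ∑ k ∈ range (i + 1), (∑ j ∈ range (i - k + 1),
          Ring.multichoose b j * Ring.multichoose (a + k + 1) (i - k - j)) * c k := by
        rw [sum_range_triangle_comm]
        simp only [sum_mul]
    _ = Lag i (a + b) x := by
        simp only [hvandermonde, lag_eq_sum_multichoose, c]

theorem lag_neg_self (n : ℕ) (x : ℝ) : Lag n (-n) x = (-x) ^ n / n.factorial := by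
  rw [lag_eq_sum_multichoose, sum_range_succ, sum_eq_zero]
  · rw [neg_pow x]
    simp
  intro k hk
  have hkn : k < n := mem_range.mp hk
  have hroot : -(n : ℝ) + k + 1 = -((n - k - 1 : ℕ) : ℝ) := by
    rw [Nat.cast_sub (by omega), Nat.cast_sub hkn.le]
    ring
  rw [hroot, ← poch_div_factorial_s14, poch, ascPochhammer_eval_neg_coe_nat_of_lt (by omega)]
  simp

theorem laguerre_sum_monomial (α x : ℝ) (i : ℕ) :
    ∑ j ∈ range (i + 1), gbinom ((j : ℝ) + α + 2) j * Lag (i - j) (-α - i - 3) (-x)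
      = x ^ i / i.factorial := by
  have hbinom (j : ℕ) : gbinom ((j : ℝ) + α + 2) j = Ring.multichoose (α + 3) j := by
    rw [gbinom_eq_multichoose]
    ring_nf
  simp only [hbinom]
  rw [sum_multichoose_mul_lag, show -α - i - 3 + (α + 3) = -(i : ℝ) by ring, lag_neg_self, neg_neg]
end

section
/- Let \(b_i^*(x) = \frac{1}{i!}\sum_{j=0}^i(-1)^j\binom{i}{j}(\alpha+1)_{i-j}x^j\) for \(i \ge 1\). Then for every real \(\alpha\), every integer \(n \ge 1\), and every nonnegative integer \(k \le n\), \(\sum_{i=1}^{\infty} b_i^*(x)\, D^{i+k} L_n^{(\alpha)}(x) = \frac{(-n)_k}{n\,\Gamma(k)} - D^k L_n^{(\alpha)}(x)\), where the sum is finite (terms vanish for \(i+k>n\)) and \(1/\Gamma(k)\) is interpreted as 0 when k = 0. -/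
/-!
The `b_i^*` are the coefficients of `t ^ i` in `(1 - t) ^ (-α-1) e ^ (-x t)`, so `b_0^* = 1` and
`D b_{i+1}^* = -b_i^*`. Hence for a polynomial `f` the sum `∑ b_i^*(x) D^i f(x)` telescopes under
differentiation and is constant; at `x = 0` we have `b_i^*(0) = C(α + i, i)`, and for
`f = D^k L_n^{(α)}` the value is a Chu–Vandermonde convolution, `(-1)^k C(n - 1, n - k)`,
which is `(-n)_k / (n Γ(k))`.
-/

open Finset

open scoped ContDiff

/-- `appell c N x` is the coefficient of `t ^ N` in `(∑ c j t ^ j) e ^ (-x t)`. -/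
noncomputable def appell (c : ℕ → ℝ) (N : ℕ) (x : ℝ) : ℝ :=
  ∑ j ∈ range (N + 1), c (N - j) * (-x) ^ j / j.factorial

section appell
variable (c : ℕ → ℝ)

theorem appell_zero : appell c 0 = fun _ => c 0 := by
  funext x; simp [appell]

theorem appell_apply_zero (N : ℕ) : appell c N 0 = c N := by
  simp [appell, sum_range_succ']

theorem contDiff_appell (N : ℕ) {n : WithTop ℕ∞} : ContDiff ℝ n (appell c N) := by
  unfold appell; fun_prop

theorem hasDerivAt_appell_succ (N : ℕ) (x : ℝ) :
    HasDerivAt (appell c (N + 1)) (-appell c N x) x := by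
  have hterm : ∀ j ∈ range (N + 2), HasDerivAt (fun y => c (N + 1 - j) * (-y) ^ j / j.factorial)
      (c (N + 1 - j) * (j * (-x) ^ (j - 1) * -1) / j.factorial) x := fun j _ =>
    (((hasDerivAt_pow j (-x)).comp x (hasDerivAt_neg x)).const_mul _).div_const _
  refine (HasDerivAt.fun_sum hterm).congr_deriv ?_
  rw [sum_range_succ', appell, ← sum_neg_distrib]
  simp only [CharP.cast_eq_zero, zero_mul, mul_zero, zero_div, add_zero]
  refine sum_congr rfl fun j _ => ?_
  rw [Nat.factorial_succ]
  push_cast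
  field_simp

theorem iteratedDeriv_appell {d N : ℕ} (h : d ≤ N) :
    iteratedDeriv d (appell c N) = fun x => (-1) ^ d * appell c (N - d) x := by
  induction d with
  | zero => simp
  | succ d ih =>
    obtain ⟨M, hM⟩ : ∃ M, N - d = M + 1 := ⟨N - (d + 1), by omega⟩
    funext x
    rw [iteratedDeriv_succ, ih (by omega), hM, ((hasDerivAt_appell_succ c M x).const_mul _).deriv,
      show N - (d + 1) = M by omega, pow_succ]
    ring

theorem iteratedDeriv_appell_of_lt {d N : ℕ} (h : N < d) : iteratedDeriv d (appell c N) = 0 := by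
  induction d, h using Nat.le_induction with
  | base =>
    rw [iteratedDeriv_succ, iteratedDeriv_appell c le_rfl, Nat.sub_self, appell_zero]
    exact deriv_const' _
  | succ d _ ih => rw [iteratedDeriv_succ, ih]; exact deriv_const' 0

theorem hasDerivAt_sum_appell_mul_iteratedDeriv {f : ℝ → ℝ} (hf : ContDiff ℝ ∞ f)
    (N : ℕ) (x : ℝ) :
    HasDerivAt (fun y => ∑ i ∈ range (N + 1), appell c i y * iteratedDeriv i f y)
      (appell c N x * iteratedDeriv (N + 1) f x) x := by
  have hdf (i : ℕ) : HasDerivAt (iteratedDeriv i f) (iteratedDeriv (i + 1) f x) x := by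
    rw [iteratedDeriv_succ]
    have hi : (i : WithTop ℕ∞) < ∞ := by exact_mod_cast ENat.natCast_lt_top i
    exact (hf.differentiable_iteratedDeriv i hi).differentiableAt.hasDerivAt
  induction N with
  | zero =>
    simpa [appell_zero] using (hdf 0).const_mul (c 0)
  | succ N ih =>
    simp only [sum_range_succ _ (N + 1)]
    refine (ih.fun_add ((hasDerivAt_appell_succ c N x).fun_mul (hdf (N + 1)))).congr_deriv ?_
    ring

theorem sum_appell_mul_iteratedDeriv_eq {f : ℝ → ℝ} (hf : ContDiff ℝ ∞ f) {N : ℕ}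
    (hN : iteratedDeriv (N + 1) f = 0) (x y : ℝ) :
    ∑ i ∈ range (N + 1), appell c i x * iteratedDeriv i f x =
      ∑ i ∈ range (N + 1), appell c i y * iteratedDeriv i f y := by
  have hderiv := hasDerivAt_sum_appell_mul_iteratedDeriv c hf N
  simp only [hN, Pi.zero_apply, mul_zero] at hderiv
  exact is_const_of_deriv_eq_zero (fun z => (hderiv z).differentiableAt)
    (fun z => (hderiv z).deriv) x y

end appell

theorem gbinom_eq_choose (y : ℝ) (m : ℕ) : gbinom y m = Ring.choose y m := by
  rw [Ring.choose_eq_smul, Polynomial.descPochhammer_smeval_eq_ascPochhammer,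
    Polynomial.ascPochhammer_smeval_eq_eval, gbinom, poch, smul_eq_mul, div_eq_inv_mul]

theorem gbinom_add (r s : ℝ) (m : ℕ) :
    gbinom (r + s) m = ∑ i ∈ range (m + 1), gbinom r i * gbinom s (m - i) := by
  simp only [gbinom_eq_choose]
  rw [Ring.add_choose_eq m (Commute.all r s), Nat.sum_antidiagonal_eq_sum_range_succ_mk]

theorem gbinom_neg (r : ℝ) (m : ℕ) : gbinom (-r) m = (-1) ^ m * gbinom (r + m - 1) m := by
  simp only [gbinom_eq_choose]
  rw [Ring.choose_neg, Units.smul_def, Int.negOnePow_def]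
  simp

theorem Lag_eq_appell (n : ℕ) (a : ℝ) : Lag n a = appell (gbinom (a + n)) n := by
  funext x
  refine sum_congr rfl fun j hj => ?_
  have hjn : j ≤ n := Nat.lt_succ_iff.mp (mem_range.mp hj)
  rw [gbinom, Nat.cast_sub hjn, neg_pow]
  ring_nf

noncomputable def bstar (α : ℝ) (i : ℕ) (x : ℝ) : ℝ :=
  1 / (i.factorial : ℝ) *
    ∑ j ∈ range (i + 1), (-1 : ℝ) ^ j * (i.choose j : ℝ) * poch (α + 1) (i - j) * x ^ j

theorem bstar_zero (α x : ℝ) : bstar α 0 x = 1 := by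
  simp [bstar, poch]

theorem bstar_eq_appell (α : ℝ) (i : ℕ) :
    bstar α i = appell (fun j => gbinom (α + j) j) i := by
  funext x
  rw [bstar, appell, mul_sum]
  refine sum_congr rfl fun j hj => ?_
  have hji : j ≤ i := Nat.lt_succ_iff.mp (mem_range.mp hj)
  rw [gbinom, add_sub_cancel_right, Nat.cast_choose ℝ hji, neg_pow]
  field_simp
  ring

theorem sum_bstar_mul_iteratedDeriv_Lag_at_zero (α : ℝ) {n k : ℕ} (hk : k ≤ n) :
    ∑ i ∈ range (n + 1), bstar α i 0 * iteratedDeriv (i + k) (Lag n α) 0 =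
      (-1) ^ k * gbinom (n - 1) (n - k) := by
  have hvanish : ∀ i ∈ range (n + 1), i ∉ range (n - k + 1) →
      bstar α i 0 * iteratedDeriv (i + k) (Lag n α) 0 = 0 := fun i _ hi => by
    rw [Lag_eq_appell, iteratedDeriv_appell_of_lt _ (by rw [mem_range] at hi; omega),
      Pi.zero_apply, mul_zero]
  -- Chu–Vandermonde, after the upper negation `(-1) ^ i C(α + i, i) = C(-(α + 1), i)`
  rw [← sum_subset (range_subset_range.mpr (by omega)) hvanish,
    show ((n : ℝ) - 1) = -(α + 1) + (α + n) by ring, gbinom_add, mul_sum]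
  refine sum_congr rfl fun i hi => ?_
  have hik : i + k ≤ n := by rw [mem_range] at hi; omega
  rw [bstar_eq_appell, appell_apply_zero, Lag_eq_appell, iteratedDeriv_appell _ hik]
  beta_reduce
  rw [appell_apply_zero, gbinom_neg, show n - (i + k) = n - k - i by omega, pow_add]
  ring_nf

theorem poch_neg_div_mul_Gamma {n k : ℕ} (hn : 1 ≤ n) (hk : k ≤ n) :
    poch (-(n : ℝ)) k / ((n : ℝ) * Real.Gamma k) = (-1) ^ k * gbinom (n - 1) (n - k) := by
  obtain ⟨n, rfl⟩ : ∃ m, n = m + 1 := ⟨n - 1, by omega⟩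
  rw [poch, ascPochhammer_eval_neg_eq_descPochhammer, descPochhammer_eval_eq_descFactorial,
    gbinom_eq_choose, Nat.cast_succ, add_sub_cancel_right, Ring.choose_natCast]
  rcases k with _ | k
  · simp
  · rw [Nat.cast_succ, Real.Gamma_nat_eq_factorial, Nat.succ_descFactorial_succ,
      Nat.descFactorial_eq_factorial_mul_choose, show n + 1 - (k + 1) = n - k by omega,
      Nat.choose_symm (by omega)]
    push_cast
    field_simp

theorem bstar_action_general (α : ℝ) (n : ℕ) (hn : 1 ≤ n) (k : ℕ) (hk : k ≤ n) (x : ℝ) :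
    ∑ i ∈ Icc 1 n,
        (1 / (i.factorial : ℝ) *
            ∑ j ∈ range (i + 1), (-1 : ℝ) ^ j * (i.choose j : ℝ) * poch (α + 1) (i - j) * x ^ j) *
          iteratedDeriv (i + k) (Lag n α) x
      = poch (-(n : ℝ)) k / ((n : ℝ) * Real.Gamma k) - iteratedDeriv k (Lag n α) x := by
  change ∑ i ∈ Icc 1 n, bstar α i x * iteratedDeriv (i + k) (Lag n α) x = _
  have hshift (i : ℕ) :
      iteratedDeriv i (iteratedDeriv k (Lag n α)) = iteratedDeriv (i + k) (Lag n α) := by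
    simp only [iteratedDeriv_eq_iterate, Function.iterate_add_apply]
  have hsmooth : ContDiff ℝ ∞ (iteratedDeriv k (Lag n α)) := by
    rw [iteratedDeriv_eq_iterate, Lag_eq_appell]
    exact (contDiff_appell _ n).iterate_deriv k
  have hvanish : iteratedDeriv (n + 1) (iteratedDeriv k (Lag n α)) = 0 := by
    rw [hshift, Lag_eq_appell, iteratedDeriv_appell_of_lt _ (by omega)]
  have hconst := sum_appell_mul_iteratedDeriv_eq (fun j => gbinom (α + j) j) hsmooth hvanish x 0
  simp only [← bstar_eq_appell, hshift] at hconst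
  have hsplit (f : ℕ → ℝ) : ∑ i ∈ range (n + 1), f i = f 0 + ∑ i ∈ Icc 1 n, f i := by
    rw [range_eq_Ico, sum_eq_sum_Ico_succ_bot (by omega), Ico_add_one_right_eq_Icc]
  rw [hsplit, sum_bstar_mul_iteratedDeriv_Lag_at_zero α hk, bstar_zero, one_mul,
    zero_add] at hconst
  rw [poch_neg_div_mul_Gamma hn hk, ← hconst]
  ring

theorem bstar_action (α : ℝ) (hα : -1 < α) (n : ℕ) (hn : 1 ≤ n) (k : ℕ) (hk : k ≤ n) (x : ℝ) :
    ∑ i ∈ Icc 1 n,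
        (1 / (i.factorial : ℝ) *
            ∑ j ∈ range (i + 1), (-1 : ℝ) ^ j * (i.choose j : ℝ) * poch (α + 1) (i - j) * x ^ j) *
          iteratedDeriv (i + k) (Lag n α) x
      = poch (-(n : ℝ)) k / ((n : ℝ) * Real.Gamma k) - iteratedDeriv k (Lag n α) x :=
  bstar_action_general α n hn k hk x
end
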